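/- Let S be a finite subset of the integers and let g : S → S be a bijection such that g(i) ∈ {i−1, i, i+1} for every i ∈ S. Then there exists a finite set P of integers such that: (a) for every p ∈ P both p and p+1 belong to S; (b) distinct elements p, p' ∈ P satisfy |p − p'| ≥ 2 (so the pairs {p, p+1} are pairwise disjoint); (c) g(p) = p+1 and g(p+1) = p for every p ∈ P; and (d) g(i) = i for every i ∈ S not lying in any pair {p, p+1} with p ∈ P. -/

import Mathlib

/-!
A bijection `g` of a finite set `S` preserves the number of elements lying at or below any
threshold `t`, so as many elements cross `t` upwards under `g` as cross it downwards. When `g`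
moves every point by at most one, the only possible upward crossing at `t` is `t ↦ t + 1` and the
only possible downward one is `t + 1 ↦ t`; hence `g t = t + 1` exactly when `g (t + 1) = t`, and
the transpositions of `g` are the pairs `{p, p + 1}` with `g p = p + 1`.
-/

open Finset

section Crossing

variable {α : Type*} [LinearOrder α] {S : Finset α} {g : α → α}

theorem card_filter_apply_le_eq (hg : Set.BijOn g S S) (t : α) :
    #{i ∈ S | g i ≤ t} = #{i ∈ S | i ≤ t} :=
  card_nbij g (fun _ hi ↦ mem_filter.2 ⟨hg.mapsTo (mem_filter.1 hi).1, (mem_filter.1 hi).2⟩)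
    (hg.injOn.mono fun _ hi ↦ (mem_filter.1 hi).1)
    fun j hj ↦ by
      obtain ⟨hjS, hjt⟩ := mem_filter.1 hj
      obtain ⟨i, hiS, rfl⟩ := hg.surjOn hjS
      exact ⟨i, mem_filter.2 ⟨hiS, hjt⟩, rfl⟩

theorem card_upcrossing_eq_card_downcrossing (hg : Set.BijOn g S S) (t : α) :
    #{i ∈ S | i ≤ t ∧ t < g i} = #{i ∈ S | g i ≤ t ∧ t < i} := by
  have h := card_sdiff_comm (card_filter_apply_le_eq hg t).symm
  convert h using 2 <;> ext i <;> simp only [mem_filter, mem_sdiff, not_and, not_le] <;> tauto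

end Crossing

section DisplacementOne

variable {S : Finset ℤ} {g : ℤ → ℤ}

theorem apply_eq_add_one_iff_apply_add_one_eq (hg : Set.BijOn g S S)
    (hdisp : ∀ i ∈ S, g i = i - 1 ∨ g i = i ∨ g i = i + 1) (t : ℤ) :
    t ∈ S ∧ g t = t + 1 ↔ t + 1 ∈ S ∧ g (t + 1) = t := by
  have hcard := card_upcrossing_eq_card_downcrossing hg t
  have hup : (∃ i ∈ S, i ≤ t ∧ t < g i) ↔ t ∈ S ∧ g t = t + 1 := by
    constructor
    · rintro ⟨i, hiS, hit, hgi⟩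
      have := hdisp i hiS
      obtain rfl : i = t := by omega
      exact ⟨hiS, by omega⟩
    · rintro ⟨htS, hgt⟩
      exact ⟨t, htS, le_rfl, by omega⟩
  have hdown : (∃ i ∈ S, g i ≤ t ∧ t < i) ↔ t + 1 ∈ S ∧ g (t + 1) = t := by
    constructor
    · rintro ⟨i, hiS, hgi, hti⟩
      have := hdisp i hiS
      obtain rfl : i = t + 1 := by omega
      exact ⟨hiS, by omega⟩
    · rintro ⟨htS, hgt⟩
      exact ⟨t + 1, htS, hgt.le, by omega⟩
  rw [← hup, ← hdown, ← filter_nonempty_iff, ← filter_nonempty_iff, ← card_pos, ← card_pos,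
    hcard]

end DisplacementOne

theorem stmt_0 (S : Finset ℤ) (g : ℤ → ℤ)
    (hbij : Set.BijOn g ↑S ↑S)
    (hdisp : ∀ i ∈ S, g i = i - 1 ∨ g i = i ∨ g i = i + 1) :
    ∃ P : Finset ℤ,
      (∀ p ∈ P, p ∈ S ∧ p + 1 ∈ S) ∧
      (∀ p ∈ P, ∀ p' ∈ P, p ≠ p' → 2 ≤ |p - p'|) ∧
      (∀ p ∈ P, g p = p + 1 ∧ g (p + 1) = p) ∧
      (∀ i ∈ S, (∀ p ∈ P, i ≠ p ∧ i ≠ p + 1) → g i = i) := by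
  have swap := apply_eq_add_one_iff_apply_add_one_eq hbij hdisp
  refine ⟨{p ∈ S | g p = p + 1}, fun p hp ↦ ?_, fun p hp p' hp' hne ↦ ?_, fun p hp ↦ ?_,
    fun i hiS hfree ↦ ?_⟩
  · exact ⟨(mem_filter.1 hp).1, ((swap p).1 (mem_filter.1 hp)).1⟩
  · have := (mem_filter.1 hp).2
    have := (mem_filter.1 hp').2
    have := ((swap p).1 (mem_filter.1 hp)).2
    have := ((swap p').1 (mem_filter.1 hp')).2
    by_contra! h
    rw [abs_lt] at h
    rcases (by omega : p' = p + 1 ∨ p = p' + 1) with rfl | rfl <;> omega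
  · exact ⟨(mem_filter.1 hp).2, ((swap p).1 (mem_filter.1 hp)).2⟩
  · rcases hdisp i hiS with h | h | h
    · have hprev := (swap (i - 1)).2 (by simpa using ⟨hiS, h⟩)
      exact absurd (by simp) (hfree (i - 1) (mem_filter.2 hprev)).2
    · exact h
    · exact absurd rfl (hfree i (mem_filter.2 ⟨hiS, h⟩)).1
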